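/- arXiv:2507.14519 — 2 statements merged into one kernel-verified Lean document; each statement's English description precedes it below -/
import Mathlib

section
/- Correctness of coefficient encoding for inner products (Cheetah-style): Let R be a commutative ring, n a positive natural number, and a, b : Fin n → R. Let p = ∑_{i : Fin n} a i · X^i and q = ∑_{j : Fin n} b (n−1−j) · X^j be polynomials in R[X] (the second encodes b in reversed coefficient order). Then the coefficient of X^{n−1} in the product p·q equals the inner product ∑_{i : Fin n} a i · b i. -/
open Polynomial Finset

/-- Correctness of Cheetah-style coefficient encoding for inner products:
with `b` encoded in reversed coefficient order, the coefficient of `X^(n−1)`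
in the polynomial product equals the inner product `∑ i, a i * b i`. -/
theorem coeff_encoding_inner_product (R : Type*) [CommRing R] (n : ℕ) (hn : 0 < n)
    (a b : Fin n → R) :
    ((∑ i : Fin n, Polynomial.C (a i) * Polynomial.X ^ (i : ℕ)) *
      (∑ j : Fin n, Polynomial.C (b j.rev) * Polynomial.X ^ (j : ℕ))).coeff (n - 1)
      = ∑ i : Fin n, a i * b i := by
  rw [Finset.sum_mul_sum]
  have h1 : ∀ (i j : Fin n),
      C (a i) * X ^ (i:ℕ) * (C (b j.rev) * X ^ (j:ℕ))
        = C (a i * b j.rev) * X ^ ((i:ℕ) + (j:ℕ)) := by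
    intro i j
    rw [C_mul, pow_add]; ring
  have h2 : ∀ (i j : Fin n), (n - 1 = (i:ℕ) + (j:ℕ)) = (i = j.rev) := by
    intro i j
    simp only [Fin.ext_iff, Fin.val_rev, eq_iff_iff]
    have := i.isLt; have := j.isLt
    omega
  simp only [h1, finset_sum_coeff, coeff_C_mul, coeff_X_pow]
  rw [Finset.sum_comm]
  simp only [h2, mul_ite, mul_one, mul_zero, Finset.sum_ite_eq', Finset.mem_univ, if_true]
  exact Equiv.sum_comp Fin.revPerm (fun i => a i * b i)
end

section
/- Correctness of coefficient encoding for matrix-vector multiplication (Cheetah MatMul): Let R be a commutative ring, d₂, d₃ positive natural numbers, W : Fin d₃ → Fin d₂ → R, and x : Fin d₂ → R. Define polynomials in R[X]: ŵ = ∑_{i : Fin d₃} ∑_{j : Fin d₂} W i j · X^{i·d₂ + (d₂−1−j)} and x̂ = ∑_{j : Fin d₂} x j · X^{j}. Then for every i : Fin d₃, the coefficient of X^{i·d₂ + d₂ − 1} in the product ŵ·x̂ equals ∑_{j : Fin d₂} W i j · x j, i.e., the strided coefficients of the polynomial product contain exactly the entries of W·x. -/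
open Polynomial Finset

lemma cheetah_key (d₂ : ℕ) (hd₂ : 0 < d₂) (a b j k : ℕ) (hj : j < d₂) (hk : k < d₂) :
    a * d₂ + (d₂ - 1 - j) + k = b * d₂ + d₂ - 1 ↔ a = b ∧ j = k := by
  constructor
  · intro h
    rcases lt_trichotomy a b with h' | h' | h'
    · have h1 : a * d₂ + d₂ ≤ b * d₂ := by
        calc a * d₂ + d₂ = (a + 1) * d₂ := by ring
        _ ≤ b * d₂ := Nat.mul_le_mul_right d₂ h'
      omega
    · subst h'; omega
    · have h1 : b * d₂ + d₂ ≤ a * d₂ := by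
        calc b * d₂ + d₂ = (b + 1) * d₂ := by ring
        _ ≤ a * d₂ := Nat.mul_le_mul_right d₂ h'
      omega
  · rintro ⟨rfl, rfl⟩; omega

/-- Correctness of Cheetah's coefficient encoding for matrix-vector
multiplication: the strided coefficients at positions `i·d₂ + d₂ − 1` of the
polynomial product contain exactly the entries of `W·x`. -/
theorem cheetah_matvec_coeff_encoding (R : Type*) [CommRing R] (d₂ d₃ : ℕ)
    (hd₂ : 0 < d₂) (hd₃ : 0 < d₃)
    (W : Fin d₃ → Fin d₂ → R) (x : Fin d₂ → R) (i : Fin d₃) :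
    ((∑ i' : Fin d₃, ∑ j : Fin d₂,
        Polynomial.C (W i' j) * Polynomial.X ^ ((i' : ℕ) * d₂ + (j.rev : ℕ))) *
      (∑ j : Fin d₂, Polynomial.C (x j) * Polynomial.X ^ (j : ℕ))).coeff
        ((i : ℕ) * d₂ + d₂ - 1)
      = ∑ j : Fin d₂, W i j * x j := by
  simp only [Finset.sum_mul, Finset.mul_sum, Polynomial.finset_sum_coeff, Fin.val_rev]
  rw [Finset.sum_comm]
  rw [Finset.sum_eq_single_of_mem i (Finset.mem_univ i)]
  · apply Finset.sum_congr rfl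
    intro k _
    rw [Finset.sum_eq_single_of_mem k (Finset.mem_univ k)]
    · rw [mul_mul_mul_comm, ← Polynomial.C_mul, ← pow_add, Polynomial.coeff_C_mul,
        Polynomial.coeff_X_pow, if_pos (by have := k.isLt; omega), mul_one]
    · intro j _ hj
      have hj' : (j : ℕ) ≠ (k : ℕ) := fun h => hj (Fin.ext h)
      rw [mul_mul_mul_comm, ← Polynomial.C_mul, ← pow_add, Polynomial.coeff_C_mul,
        Polynomial.coeff_X_pow, if_neg (by have := j.isLt; have := k.isLt; omega), mul_zero]
  · intro i' _ hi'
    apply Finset.sum_eq_zero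
    intro k _
    apply Finset.sum_eq_zero
    intro j _
    rw [mul_mul_mul_comm, ← Polynomial.C_mul, ← pow_add, Polynomial.coeff_C_mul,
      Polynomial.coeff_X_pow, if_neg, mul_zero]
    intro h
    apply hi'
    apply Fin.ext
    have h' : (i' : ℕ) * d₂ + (d₂ - 1 - (j : ℕ)) + (k : ℕ) = (i : ℕ) * d₂ + d₂ - 1 := by omega
    exact ((cheetah_key d₂ hd₂ i' i j k j.isLt k.isLt).mp h').1
end
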